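/- Let (H, L) be a quasi-abelian partial matched pair. Then for all h ∈ H: h ⇀ 1_L = Σ (h₁ ⇀ 1_L)ε_L(h₂ ⇀ 1_L) = Σ ε_L(h₁ ⇀ 1_L)(h₂ ⇀ 1_L). -/
import Mathlib


open TensorProduct LinearMap

namespace PartialHopf

variable (k : Type*) [Field k]

section Action

variable (H A : Type*) [Ring H] [HopfAlgebra k H] [Ring A] [Algebra k A]

/-- `A` is a left partial `H`-module algebra via the bilinear action `act`
(Definition 2.1 / Caenepeel-Janssen): `1 ⇀ a = a`,
`h ⇀ (ab) = Σ (h₁ ⇀ a)(h₂ ⇀ b)` and `h ⇀ (g ⇀ a) = Σ (h₁ ⇀ 1)(h₂g ⇀ a)`. -/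
structure IsPartialAction (act : H →ₗ[k] A →ₗ[k] A) : Prop where
  one_act : ∀ a : A, act 1 a = a
  act_mul : ∀ (h : H) (a b : A), act h (a * b)
      = LinearMap.mul' k A
          ((TensorProduct.map (act.flip a) (act.flip b)) (Coalgebra.comul (R := k) h))
  act_act : ∀ (h g : H) (a : A), act h (act g a)
      = LinearMap.mul' k A
          ((TensorProduct.map (act.flip 1) ((act.flip a) ∘ₗ (LinearMap.mulRight k g)))
            (Coalgebra.comul (R := k) h))

end Action

section Coaction

variable (H C : Type*) [Ring H] [HopfAlgebra k H]
  [AddCommGroup C] [Module k C] [Coalgebra k C]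

/-- Auxiliary map sending `Σ c ⊗ d` to `Σ c⁰ ⊗ d⁰ ⊗ c¹d¹`. -/
noncomputable def coactPairMul (ρ : C →ₗ[k] C ⊗[k] H) :
    C ⊗[k] C →ₗ[k] (C ⊗[k] C) ⊗[k] H :=
  (LinearMap.lTensor (C ⊗[k] C) (LinearMap.mul' k H))
    ∘ₗ (TensorProduct.tensorTensorTensorComm k C H C H).toLinearMap
    ∘ₗ (TensorProduct.map ρ ρ)

/-- Auxiliary map sending `c` to `Σ c₁⁰ ⊗ (c₁¹)₁ ⊗ (c₁¹)₂ ε_C(c₂⁰) c₂¹`. -/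
noncomputable def coactRight (ρ : C →ₗ[k] C ⊗[k] H) : C →ₗ[k] (C ⊗[k] H) ⊗[k] H :=
  (TensorProduct.assoc k C H H).symm.toLinearMap
    ∘ₗ (LinearMap.lTensor C
        ((LinearMap.lTensor H (LinearMap.mul' k H)) ∘ₗ (TensorProduct.assoc k H H H).toLinearMap))
    ∘ₗ (TensorProduct.assoc k C (H ⊗[k] H) H).toLinearMap
    ∘ₗ (TensorProduct.map ((LinearMap.lTensor C (Coalgebra.comul (R := k))) ∘ₗ ρ)
          ((TensorProduct.lid k H).toLinearMap
            ∘ₗ (LinearMap.rTensor H (Coalgebra.counit (R := k))) ∘ₗ ρ))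
    ∘ₗ (Coalgebra.comul (R := k))

/-- `C` is a right partial `H`-comodule coalgebra via `ρ` (Definition 2.3 / Batista-Vercruysse):
`(id ⊗ ε_H)ρ(c) = c`, `(Δ_C ⊗ id)ρ(c) = Σ c₁⁰ ⊗ c₂⁰ ⊗ c₁¹c₂¹` and
`(ρ ⊗ id)ρ(c) = Σ c₁⁰ ⊗ (c₁¹)₁ ⊗ (c₁¹)₂ ε_C(c₂⁰)c₂¹`. -/
structure IsPartialCoaction (ρ : C →ₗ[k] C ⊗[k] H) : Prop where
  tensor_counit : ∀ c : C,
    (TensorProduct.rid k C) ((LinearMap.lTensor C (Coalgebra.counit (R := k))) (ρ c)) = c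
  comul_coact : ∀ c : C,
    (LinearMap.rTensor H (Coalgebra.comul (R := k))) (ρ c)
      = coactPairMul k H C ρ (Coalgebra.comul (R := k) c)
  coact_coact : ∀ c : C,
    (LinearMap.rTensor H ρ) (ρ c) = coactRight k H C ρ c

end Coaction

end PartialHopf
namespace PartialHopf
variable (k : Type*) [Field k]

section MatchedPair

variable (H L : Type*) [Ring H] [HopfAlgebra k H] [Ring L] [HopfAlgebra k L]

/-- Generic swap `(m ⊗ n) ⊗ p ↦ (m ⊗ p) ⊗ n`. -/
noncomputable def swapR (M N P : Type*) [AddCommGroup M] [AddCommGroup N] [AddCommGroup P]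
    [Module k M] [Module k N] [Module k P] :
    (M ⊗[k] N) ⊗[k] P →ₗ[k] (M ⊗[k] P) ⊗[k] N :=
  (TensorProduct.assoc k M P N).symm.toLinearMap
    ∘ₗ (LinearMap.lTensor M (TensorProduct.comm k N P).toLinearMap)
    ∘ₗ (TensorProduct.assoc k M N P).toLinearMap

variable {H L}

/-- The bilinear action as a map on the tensor product. -/
noncomputable def actT (act : H →ₗ[k] L →ₗ[k] L) : H ⊗[k] L →ₗ[k] L :=
  TensorProduct.lift act

/-- Shuffle `(x₁ ⊗ x₂) ⊗ (a ⊗ y) ↦ a ⊗ (x₁ ⊗ x₂y)`. -/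
noncomputable def psiMap : (L ⊗[k] L) ⊗[k] (H ⊗[k] L) →ₗ[k] H ⊗[k] (L ⊗[k] L) :=
  (TensorProduct.assoc k H L L).toLinearMap
    ∘ₗ (TensorProduct.map (TensorProduct.comm k L H).toLinearMap (LinearMap.mul' k L))
    ∘ₗ (TensorProduct.tensorTensorTensorComm k L L H L).toLinearMap

/-- `h ↦ Σ (h₂g)⁰ ⊗ (h₁ ⇀ x)₁ ⊗ (h₁ ⇀ x)₂ (h₂g)¹`: the left hand side of the
compatibility condition (iii) of a partial matched pair. -/
noncomputable def mpLHS (act : H →ₗ[k] L →ₗ[k] L) (ρ : H →ₗ[k] H ⊗[k] L) (g : H) (x : L) :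
    H →ₗ[k] H ⊗[k] (L ⊗[k] L) :=
  psiMap k ∘ₗ (TensorProduct.map ((Coalgebra.comul (R := k)) ∘ₗ act.flip x)
      (ρ ∘ₗ LinearMap.mulRight k g)) ∘ₗ (Coalgebra.comul (R := k))

/-- `h ⊗ x ↦ (h⁰ ⇀ x) ⊗ h¹`. -/
noncomputable def phiB (act : H →ₗ[k] L →ₗ[k] L) (ρ : H →ₗ[k] H ⊗[k] L) :
    H ⊗[k] L →ₗ[k] L ⊗[k] L :=
  (LinearMap.rTensor L (actT k act)) ∘ₗ (swapR k H L L) ∘ₗ (LinearMap.rTensor L ρ)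

/-- `(h₁ ⊗ h₂) ⊗ (x₁ ⊗ x₂) ↦ (h₁⁰ ⇀ x₁) ⊗ h₁¹(h₂ ⇀ x₂)`. -/
noncomputable def bAssemble (act : H →ₗ[k] L →ₗ[k] L) (ρ : H →ₗ[k] H ⊗[k] L) :
    (H ⊗[k] H) ⊗[k] (L ⊗[k] L) →ₗ[k] L ⊗[k] L :=
  (LinearMap.lTensor L (LinearMap.mul' k L))
    ∘ₗ (TensorProduct.assoc k L L L).toLinearMap
    ∘ₗ (TensorProduct.map (phiB k act ρ) (actT k act))
    ∘ₗ (TensorProduct.tensorTensorTensorComm k H H L L).toLinearMap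

/-- `h ↦ Σ (h₁⁰ ⇀ x₁) ⊗ h₁¹(h₂ ⇀ x₂)`. -/
noncomputable def betaMap (act : H →ₗ[k] L →ₗ[k] L) (ρ : H →ₗ[k] H ⊗[k] L) (x : L) :
    H →ₗ[k] L ⊗[k] L :=
  (bAssemble k act ρ)
    ∘ₗ ((TensorProduct.mk k (H ⊗[k] H) (L ⊗[k] L)).flip (Coalgebra.comul (R := k) x))
    ∘ₗ (Coalgebra.comul (R := k))

/-- `h₁ ⊗ g ↦ h₁⁰g ⊗ h₁¹`. -/
noncomputable def phiC (ρ : H →ₗ[k] H ⊗[k] L) : H ⊗[k] H →ₗ[k] H ⊗[k] L :=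
  (LinearMap.rTensor L (LinearMap.mul' k H)) ∘ₗ (swapR k H L H) ∘ₗ (LinearMap.rTensor H ρ)

/-- `(h₁ ⊗ h₂) ⊗ (g⁰ ⊗ g¹) ↦ h₁⁰g⁰ ⊗ h₁¹(h₂ ⇀ g¹)`. -/
noncomputable def cAssemble (act : H →ₗ[k] L →ₗ[k] L) (ρ : H →ₗ[k] H ⊗[k] L) :
    (H ⊗[k] H) ⊗[k] (H ⊗[k] L) →ₗ[k] H ⊗[k] L :=
  (LinearMap.lTensor H (LinearMap.mul' k L))
    ∘ₗ (TensorProduct.assoc k H L L).toLinearMap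
    ∘ₗ (TensorProduct.map (phiC k ρ) (actT k act))
    ∘ₗ (TensorProduct.tensorTensorTensorComm k H H H L).toLinearMap

/-- `h ↦ Σ h₁⁰g⁰ ⊗ h₁¹(h₂ ⇀ g¹)`. -/
noncomputable def gammaMap (act : H →ₗ[k] L →ₗ[k] L) (ρ : H →ₗ[k] H ⊗[k] L) (g : H) :
    H →ₗ[k] H ⊗[k] L :=
  (cAssemble k act ρ)
    ∘ₗ ((TensorProduct.mk k (H ⊗[k] H) (H ⊗[k] L)).flip (ρ g))
    ∘ₗ (Coalgebra.comul (R := k))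

/-- `h ↦ Σ h₃⁰g⁰ ⊗ (h₁⁰ ⇀ x₁) ⊗ h₁¹(h₂ ⇀ x₂)h₃¹(h₄ ⇀ g¹)`: the right hand side of the
compatibility condition (iii) of a partial matched pair. -/
noncomputable def mpRHS (act : H →ₗ[k] L →ₗ[k] L) (ρ : H →ₗ[k] H ⊗[k] L) (g : H) (x : L) :
    H →ₗ[k] H ⊗[k] (L ⊗[k] L) :=
  psiMap k ∘ₗ (TensorProduct.map (betaMap k act ρ x) (gammaMap k act ρ g))
    ∘ₗ (Coalgebra.comul (R := k))

/-- `h ↦ Σ ε_H(h⁰) h¹`. -/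
noncomputable def coactCounit (ρ : H →ₗ[k] H ⊗[k] L) : H →ₗ[k] L :=
  (TensorProduct.lid k L).toLinearMap
    ∘ₗ (LinearMap.rTensor L (Coalgebra.counit (R := k))) ∘ₗ ρ

variable (H L)

/-- Definition 3.1: `(H, L)` is a partial matched pair of Hopf algebras. -/
structure IsPartialMatchedPair (act : H →ₗ[k] L →ₗ[k] L) (ρ : H →ₗ[k] H ⊗[k] L) : Prop where
  action : IsPartialAction k H L act
  coaction : IsPartialCoaction k L H ρ
  compat : ∀ (h g : H) (x : L), mpLHS k act ρ g x h = mpRHS k act ρ g x h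
  counit_act : ∀ (h : H) (x : L),
    Coalgebra.counit (R := k) (act h x)
      = Coalgebra.counit (R := k) (act h 1) * Coalgebra.counit (R := k) x
  coact_one : ρ 1 = (1 : H) ⊗ₜ[k] (coactCounit k ρ (1 : H))

/-- Definition 3.5: quasi-abelian condition
`Σ h₂⁰ ⊗ (h₁ ⇀ x)h₂¹ = Σ h₁⁰ ⊗ h₁¹(h₂ ⇀ x)`. -/
def IsQuasiAbelian (act : H →ₗ[k] L →ₗ[k] L) (ρ : H →ₗ[k] H ⊗[k] L) : Prop :=
  ∀ (h : H) (x : L),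
    ((LinearMap.lTensor H (LinearMap.mul' k L))
        ∘ₗ (TensorProduct.assoc k H L L).toLinearMap
        ∘ₗ (LinearMap.rTensor L (TensorProduct.comm k L H).toLinearMap)
        ∘ₗ (TensorProduct.assoc k L H L).symm.toLinearMap)
      ((TensorProduct.map (act.flip x) ρ) (Coalgebra.comul (R := k) h))
    = ((LinearMap.lTensor H (LinearMap.mul' k L))
        ∘ₗ (TensorProduct.assoc k H L L).toLinearMap)
      ((TensorProduct.map ρ (act.flip x)) (Coalgebra.comul (R := k) h))

end MatchedPair


section MyAux

variable {k H L : Type*} [Field k] [Ring H] [HopfAlgebra k H] [Ring L] [HopfAlgebra k L]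

@[simp] lemma swapR_tmul {M N P : Type*} [AddCommGroup M] [AddCommGroup N] [AddCommGroup P]
    [Module k M] [Module k N] [Module k P] (m : M) (n : N) (p : P) :
    swapR k M N P ((m ⊗ₜ n) ⊗ₜ p) = (m ⊗ₜ p) ⊗ₜ n := by
  simp [swapR]

@[simp] lemma psiMap_tmul (x₁ x₂ : L) (a : H) (y : L) :
    psiMap k ((x₁ ⊗ₜ x₂) ⊗ₜ (a ⊗ₜ y)) = a ⊗ₜ (x₁ ⊗ₜ[k] (x₂ * y)) := by
  simp [psiMap]

/-- `y ⊗ z ↦ ε(z) • y`. -/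
noncomputable def cPL (k L : Type*) [Field k] [Ring L] [HopfAlgebra k L] :
    L ⊗[k] L →ₗ[k] L :=
  (TensorProduct.rid k L).toLinearMap ∘ₗ LinearMap.lTensor L (Coalgebra.counit (R := k))

/-- `a ⊗ y ↦ ε(a)ε(y)`. -/
noncomputable def cR2 (k H L : Type*) [Field k] [Ring H] [HopfAlgebra k H] [Ring L]
    [HopfAlgebra k L] : H ⊗[k] L →ₗ[k] k :=
  (TensorProduct.lid k k).toLinearMap
    ∘ₗ TensorProduct.map (Coalgebra.counit (R := k)) (Coalgebra.counit (R := k))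

/-- `a ⊗ (y ⊗ z) ↦ ε(a)ε(z) • y`. -/
noncomputable def cPhi (k H L : Type*) [Field k] [Ring H] [HopfAlgebra k H] [Ring L]
    [HopfAlgebra k L] : H ⊗[k] (L ⊗[k] L) →ₗ[k] L :=
  (TensorProduct.lid k L).toLinearMap ∘ₗ LinearMap.rTensor L (Coalgebra.counit (R := k))
    ∘ₗ LinearMap.lTensor H (cPL k L)

/-- `c ⊗ d ↦ ε(d) • c`. -/
noncomputable def cW (k H L : Type*) [Field k] [Ring H] [HopfAlgebra k H] [Ring L]
    [HopfAlgebra k L] : H ⊗[k] L →ₗ[k] H :=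
  (TensorProduct.rid k H).toLinearMap ∘ₗ LinearMap.lTensor H (Coalgebra.counit (R := k))

@[simp] lemma cPL_tmul (y z : L) : cPL k L (y ⊗ₜ z) = Coalgebra.counit (R := k) z • y := by
  simp [cPL]

@[simp] lemma cR2_tmul (a : H) (y : L) :
    cR2 k H L (a ⊗ₜ y) = Coalgebra.counit (R := k) a * Coalgebra.counit (R := k) y := by
  simp [cR2, smul_eq_mul]

@[simp] lemma cPhi_tmul (a : H) (u : L ⊗[k] L) :
    cPhi k H L (a ⊗ₜ u) = Coalgebra.counit (R := k) a • cPL k L u := by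
  simp [cPhi]

@[simp] lemma cW_tmul (c : H) (d : L) : cW k H L (c ⊗ₜ d) = Coalgebra.counit (R := k) d • c := by
  simp [cW]

end MyAux

section MyAux2

variable {k H L : Type*} [Field k] [Ring H] [HopfAlgebra k H] [Ring L] [HopfAlgebra k L]
variable (act : H →ₗ[k] L →ₗ[k] L) (ρ : H →ₗ[k] H ⊗[k] L)

lemma cPhi_psi :
    cPhi k H L ∘ₗ psiMap k
      = (TensorProduct.rid k L).toLinearMap ∘ₗ TensorProduct.map (cPL k L) (cR2 k H L) := by
  apply TensorProduct.ext_fourfold'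
  intro x₁ x₂ a y
  simp [smul_smul]
  ring_nf

lemma cPL_comul : cPL k L ∘ₗ Coalgebra.comul (R := k) = LinearMap.id := by
  ext a; simp [cPL]

lemma counit_map_eq (t : H ⊗[k] L) :
    cR2 k H L t = Coalgebra.counit (R := k) (cW k H L t) := by
  induction t using TensorProduct.induction_on with
  | zero => simp
  | tmul a y => simp [mul_comm]
  | add u v hu hv => rw [map_add, map_add, map_add, hu, hv]

end MyAux2
section MyAux3

variable {k H L : Type*} [Field k] [Ring H] [HopfAlgebra k H] [Ring L] [HopfAlgebra k L]
variable (act : H →ₗ[k] L →ₗ[k] L) (ρ : H →ₗ[k] H ⊗[k] L)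

lemma phiC_tmul_one (a : H) : phiC k ρ (a ⊗ₜ (1 : H)) = ρ a := by
  have key : LinearMap.rTensor L (LinearMap.mul' k H) ∘ₗ swapR k H L H
        ∘ₗ (TensorProduct.mk k (H ⊗[k] L) H).flip 1 = LinearMap.id := by
    apply TensorProduct.ext'
    intro c d
    simp
  have := LinearMap.congr_fun key (ρ a)
  simp only [LinearMap.coe_comp, Function.comp_apply, LinearMap.flip_apply,
    TensorProduct.mk_apply, LinearMap.id_coe, id_eq] at this
  simp only [phiC, LinearMap.coe_comp, Function.comp_apply, LinearMap.rTensor_tmul,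
    LinearMap.id_coe, id_eq]
  exact this

lemma cPL_phiB (htc : ∀ c : H,
      (TensorProduct.rid k H) (LinearMap.lTensor H (Coalgebra.counit (R := k)) (ρ c)) = c)
    (a : H) (x : L) : cPL k L (phiB k act ρ (a ⊗ₜ x)) = act a x := by
  have key : cPL k L ∘ₗ LinearMap.rTensor L (actT k act) ∘ₗ swapR k H L L
        ∘ₗ (TensorProduct.mk k (H ⊗[k] L) L).flip x
      = actT k act ∘ₗ ((TensorProduct.mk k H L).flip x) ∘ₗ cW k H L := by
    apply TensorProduct.ext'
    intro c d
    simp [actT, TensorProduct.smul_tmul']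
  have := LinearMap.congr_fun key (ρ a)
  simp only [LinearMap.coe_comp, Function.comp_apply, LinearMap.flip_apply,
    TensorProduct.mk_apply] at this
  simp only [phiB, LinearMap.coe_comp, Function.comp_apply, LinearMap.rTensor_tmul,
    LinearMap.id_coe, id_eq]
  rw [this]
  have h2 : cW k H L (ρ a) = a := by
    simpa [cW] using htc a
  rw [h2]
  simp [actT]

lemma cPL_end : cPL k L ∘ₗ LinearMap.lTensor L (LinearMap.mul' k L)
      ∘ₗ (TensorProduct.assoc k L L L).toLinearMap
    = (TensorProduct.rid k L).toLinearMap
        ∘ₗ TensorProduct.map (cPL k L) (Coalgebra.counit (R := k)) := by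
  apply TensorProduct.ext_threefold
  intro y w z
  simp [smul_smul]
  ring_nf

lemma cR2_end : cR2 k H L ∘ₗ LinearMap.lTensor H (LinearMap.mul' k L)
      ∘ₗ (TensorProduct.assoc k H L L).toLinearMap
    = (TensorProduct.lid k k).toLinearMap
        ∘ₗ TensorProduct.map (cR2 k H L) (Coalgebra.counit (R := k)) := by
  apply TensorProduct.ext_threefold
  intro c d z
  simp [smul_eq_mul]
  ring

end MyAux3
section MyAux4

variable {k H L : Type*} [Field k] [Ring H] [HopfAlgebra k H] [Ring L] [HopfAlgebra k L]
variable (act : H →ₗ[k] L →ₗ[k] L) (ρ : H →ₗ[k] H ⊗[k] L)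

lemma cPL_beta
    (htc : ∀ c : H,
      (TensorProduct.rid k H) (LinearMap.lTensor H (Coalgebra.counit (R := k)) (ρ c)) = c) :
    cPL k L ∘ₗ betaMap k act ρ 1
      = (TensorProduct.rid k L).toLinearMap
          ∘ₗ TensorProduct.map (act.flip 1) ((Coalgebra.counit (R := k)) ∘ₗ act.flip 1)
          ∘ₗ Coalgebra.comul (R := k) := by
  have key : cPL k L ∘ₗ bAssemble k act ρ
        ∘ₗ (TensorProduct.mk k (H ⊗[k] H) (L ⊗[k] L)).flip ((1 : L) ⊗ₜ (1 : L))
      = (TensorProduct.rid k L).toLinearMap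
          ∘ₗ TensorProduct.map (act.flip 1) ((Coalgebra.counit (R := k)) ∘ₗ act.flip 1) := by
    apply TensorProduct.ext'
    intro a b
    simp only [LinearMap.coe_comp, Function.comp_apply, TensorProduct.mk_apply,
      LinearMap.flip_apply, bAssemble, TensorProduct.tensorTensorTensorComm_tmul,
      TensorProduct.map_tmul, LinearEquiv.coe_coe]
    have e := LinearMap.congr_fun (cPL_end (k := k) (L := L))
      ((phiB k act ρ (a ⊗ₜ 1)) ⊗ₜ (actT k act (b ⊗ₜ 1)))
    simp only [LinearMap.coe_comp, Function.comp_apply, LinearEquiv.coe_coe] at e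
    rw [e]
    simp [cPL_phiB act ρ htc, actT]
  apply LinearMap.ext; intro c
  have e2 := LinearMap.congr_fun key (Coalgebra.comul (R := k) c)
  simp only [LinearMap.coe_comp, Function.comp_apply, TensorProduct.mk_apply,
    LinearMap.flip_apply, LinearEquiv.coe_coe] at e2 ⊢
  simpa [betaMap, Algebra.TensorProduct.one_def] using e2

lemma counit_lambda_one
    (htc : ∀ c : H,
      (TensorProduct.rid k H) (LinearMap.lTensor H (Coalgebra.counit (R := k)) (ρ c)) = c)
    (hcoone : ρ 1 = (1 : H) ⊗ₜ[k] coactCounit k ρ 1) :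
    Coalgebra.counit (R := k) (coactCounit k ρ 1) = 1 := by
  have h := htc 1
  rw [hcoone] at h
  simp only [LinearMap.lTensor_tmul, TensorProduct.rid_tmul] at h
  have h2 := congrArg (Coalgebra.counit (R := k) (A := H)) h
  simpa using h2

lemma cR2_gamma
    (htc : ∀ c : H,
      (TensorProduct.rid k H) (LinearMap.lTensor H (Coalgebra.counit (R := k)) (ρ c)) = c)
    (hcoone : ρ 1 = (1 : H) ⊗ₜ[k] coactCounit k ρ 1)
    (hcact : ∀ (b : H) (x : L),
      Coalgebra.counit (R := k) (act b x)
        = Coalgebra.counit (R := k) (act b 1) * Coalgebra.counit (R := k) x) :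
    cR2 k H L ∘ₗ gammaMap k act ρ 1 = (Coalgebra.counit (R := k)) ∘ₗ act.flip 1 := by
  have key : cR2 k H L ∘ₗ cAssemble k act ρ
        ∘ₗ (TensorProduct.mk k (H ⊗[k] H) (H ⊗[k] L)).flip ((1 : H) ⊗ₜ (coactCounit k ρ 1))
      = (TensorProduct.lid k k).toLinearMap
          ∘ₗ TensorProduct.map (Coalgebra.counit (R := k))
              ((Coalgebra.counit (R := k)) ∘ₗ act.flip 1) := by
    apply TensorProduct.ext'
    intro a b
    simp only [LinearMap.coe_comp, Function.comp_apply, TensorProduct.mk_apply,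
      LinearMap.flip_apply, cAssemble, TensorProduct.tensorTensorTensorComm_tmul,
      TensorProduct.map_tmul, LinearEquiv.coe_coe]
    have e := LinearMap.congr_fun (cR2_end (k := k) (H := H) (L := L))
      ((phiC k ρ (a ⊗ₜ 1)) ⊗ₜ (actT k act (b ⊗ₜ (coactCounit k ρ 1))))
    simp only [LinearMap.coe_comp, Function.comp_apply, LinearEquiv.coe_coe] at e
    rw [e]
    rw [phiC_tmul_one]
    have hcW : cR2 k H L (ρ a) = Coalgebra.counit (R := k) a := by
      rw [counit_map_eq]
      congr 1
      simpa [cW] using htc a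
    simp only [TensorProduct.map_tmul, TensorProduct.lid_tmul, hcW, actT,
      TensorProduct.lift.tmul, LinearMap.coe_comp, Function.comp_apply, LinearMap.flip_apply]
    rw [hcact b (coactCounit k ρ 1), counit_lambda_one ρ htc hcoone]
    ring_nf
  apply LinearMap.ext; intro c
  have e2 := LinearMap.congr_fun key (Coalgebra.comul (R := k) c)
  simp only [LinearMap.coe_comp, Function.comp_apply, TensorProduct.mk_apply,
    LinearMap.flip_apply, LinearEquiv.coe_coe] at e2 ⊢
  rw [gammaMap, hcoone]
  simp only [LinearMap.coe_comp, Function.comp_apply, TensorProduct.mk_apply,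
    LinearMap.flip_apply]
  rw [e2]
  rw [← LinearMap.lTensor_comp_rTensor, LinearMap.comp_apply]
  simp
end MyAux4
section MyAux5

variable {k H L : Type*} [Field k] [Ring H] [HopfAlgebra k H] [Ring L] [HopfAlgebra k L]
variable (act : H →ₗ[k] L →ₗ[k] L) (ρ : H →ₗ[k] H ⊗[k] L)

lemma counit_mul'_eq (t : L ⊗[k] L) :
    Coalgebra.counit (R := k) (LinearMap.mul' k L t)
      = (TensorProduct.lid k k)
          (TensorProduct.map (Coalgebra.counit (R := k)) (Coalgebra.counit (R := k)) t) := by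
  induction t using TensorProduct.induction_on with
  | zero => simp
  | tmul y z => simp [smul_eq_mul]
  | add u v hu hv => rw [map_add, map_add, map_add, hu, hv]; exact (map_add _ _ _).symm

lemma counit_conv_sq (hAct : IsPartialAction k H L act) :
    (TensorProduct.lid k k).toLinearMap
        ∘ₗ TensorProduct.map ((Coalgebra.counit (R := k)) ∘ₗ act.flip 1)
            ((Coalgebra.counit (R := k)) ∘ₗ act.flip 1)
        ∘ₗ Coalgebra.comul (R := k)
      = (Coalgebra.counit (R := k)) ∘ₗ act.flip 1 := by
  apply LinearMap.ext; intro g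
  have hA := hAct.act_mul g 1 1
  rw [mul_one] at hA
  simp only [LinearMap.coe_comp, Function.comp_apply, LinearEquiv.coe_coe, LinearMap.flip_apply]
  rw [TensorProduct.map_comp, LinearMap.comp_apply, ← counit_mul'_eq, ← hA]

lemma conv_collapse (f : H →ₗ[k] L) (ee : H →ₗ[k] k)
    (hsq : (TensorProduct.lid k k).toLinearMap ∘ₗ TensorProduct.map ee ee
        ∘ₗ Coalgebra.comul (R := k) = ee) (c : H) :
    (TensorProduct.rid k L)
        ((TensorProduct.map
            ((TensorProduct.rid k L).toLinearMap ∘ₗ TensorProduct.map f ee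
              ∘ₗ Coalgebra.comul (R := k)) ee)
          (Coalgebra.comul (R := k) c))
      = (TensorProduct.rid k L) ((TensorProduct.map f ee) (Coalgebra.comul (R := k) c)) := by
  have hT : (TensorProduct.rid k L).toLinearMap
        ∘ₗ TensorProduct.map ((TensorProduct.rid k L).toLinearMap ∘ₗ TensorProduct.map f ee) ee
        ∘ₗ (TensorProduct.assoc k H H H).symm.toLinearMap
      = (TensorProduct.rid k L).toLinearMap
          ∘ₗ TensorProduct.map f
              ((TensorProduct.lid k k).toLinearMap ∘ₗ TensorProduct.map ee ee) := by
    apply TensorProduct.ext'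
    intro a u
    induction u using TensorProduct.induction_on with
    | zero => rw [TensorProduct.tmul_zero, map_zero, map_zero]
    | tmul b d => simp [smul_smul]; ring_nf
    | add u v hu hv => simp only [TensorProduct.tmul_add, map_add, hu, hv]
  have step1 : TensorProduct.map
        ((TensorProduct.rid k L).toLinearMap ∘ₗ TensorProduct.map f ee
          ∘ₗ Coalgebra.comul (R := k)) ee
      = TensorProduct.map ((TensorProduct.rid k L).toLinearMap ∘ₗ TensorProduct.map f ee) ee
          ∘ₗ LinearMap.rTensor H (Coalgebra.comul (R := k)) := by
    apply TensorProduct.ext'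
    intro a b
    simp
  rw [step1, LinearMap.comp_apply]
  rw [← Coalgebra.coassoc_symm_apply (R := k) c]
  have h2 := LinearMap.congr_fun hT
    (LinearMap.lTensor H (Coalgebra.comul (R := k)) (Coalgebra.comul (R := k) c))
  simp only [LinearMap.coe_comp, Function.comp_apply, LinearEquiv.coe_coe] at h2
  rw [h2]
  have step2 : TensorProduct.map f
        ((TensorProduct.lid k k).toLinearMap ∘ₗ TensorProduct.map ee ee)
        ∘ₗ LinearMap.lTensor H (Coalgebra.comul (R := k))
      = TensorProduct.map f ee := by
    apply TensorProduct.ext'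
    intro a b
    have hb := LinearMap.congr_fun hsq b
    simp only [LinearMap.coe_comp, Function.comp_apply, LinearEquiv.coe_coe] at hb
    simp only [LinearMap.lTensor_tmul, TensorProduct.map_tmul, LinearMap.coe_comp,
      Function.comp_apply, LinearEquiv.coe_coe, hb]
  rw [← LinearMap.comp_apply (TensorProduct.map f _), step2]

lemma cW_qa_left :
    cW k H L ∘ₗ LinearMap.lTensor H (LinearMap.mul' k L)
        ∘ₗ (TensorProduct.assoc k H L L).toLinearMap
        ∘ₗ LinearMap.rTensor L (TensorProduct.comm k L H).toLinearMap
      = (TensorProduct.lid k H).toLinearMap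
          ∘ₗ TensorProduct.map (Coalgebra.counit (R := k)) (cW k H L)
          ∘ₗ (TensorProduct.assoc k L H L).toLinearMap := by
  apply TensorProduct.ext_threefold
  intro y c d
  simp [smul_smul]
  ring_nf

lemma cW_qa_right :
    cW k H L ∘ₗ LinearMap.lTensor H (LinearMap.mul' k L)
        ∘ₗ (TensorProduct.assoc k H L L).toLinearMap
      = (TensorProduct.rid k H).toLinearMap
          ∘ₗ TensorProduct.map (cW k H L) (Coalgebra.counit (R := k)) := by
  apply TensorProduct.ext_threefold
  intro c d y
  simp [smul_smul]
  ring_nf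

lemma map_lid_comm (φ : H →ₗ[k] k) (g : H →ₗ[k] L) :
    g ∘ₗ (TensorProduct.lid k H).toLinearMap ∘ₗ TensorProduct.map φ LinearMap.id
      = (TensorProduct.lid k L).toLinearMap ∘ₗ TensorProduct.map φ g := by
  apply TensorProduct.ext'
  intro a b
  simp

lemma map_rid_comm (φ : H →ₗ[k] k) (g : H →ₗ[k] L) :
    g ∘ₗ (TensorProduct.rid k H).toLinearMap ∘ₗ TensorProduct.map LinearMap.id φ
      = (TensorProduct.rid k L).toLinearMap ∘ₗ TensorProduct.map g φ := by
  apply TensorProduct.ext'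
  intro a b
  simp


end MyAux5
/-- Lemma 3.8(i): for a quasi-abelian partial matched pair `(H, L)`,
`h ⇀ 1_L = Σ (h₁ ⇀ 1_L)ε_L(h₂ ⇀ 1_L) = Σ ε_L(h₁ ⇀ 1_L)(h₂ ⇀ 1_L)` for all `h ∈ H`. -/
theorem act_one_eq_sweedler
    {k H L : Type*} [Field k] [Ring H] [HopfAlgebra k H] [Ring L] [HopfAlgebra k L]
    (act : H →ₗ[k] L →ₗ[k] L) (ρ : H →ₗ[k] H ⊗[k] L)
    (hpmp : IsPartialMatchedPair k H L act ρ)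
    (hqa : IsQuasiAbelian k H L act ρ) :
    ∀ h : H,
      act h 1
          = (TensorProduct.rid k L)
              ((TensorProduct.map (act.flip 1)
                  ((Coalgebra.counit (R := k)) ∘ₗ act.flip 1))
                (Coalgebra.comul (R := k) h))
        ∧ act h 1
          = (TensorProduct.lid k L)
              ((TensorProduct.map ((Coalgebra.counit (R := k)) ∘ₗ act.flip 1)
                  (act.flip 1))
                (Coalgebra.comul (R := k) h)) := by
  obtain ⟨hAct, hCo, hcompat, hcact, hcoone⟩ := hpmp
  have htc := hCo.tensor_counit
  have hcWρ : cW k H L ∘ₗ ρ = LinearMap.id := by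
    apply LinearMap.ext; intro c
    simpa [cW] using htc c
  have hcR2ρ : cR2 k H L ∘ₗ ρ = Coalgebra.counit (R := k) := by
    apply LinearMap.ext; intro c
    rw [LinearMap.comp_apply, counit_map_eq]
    congr 1
    simpa [cW] using htc c
  intro h
  -- Goal 1
  have e1 : cPhi k H L (mpLHS k act ρ 1 1 h) = act h 1 := by
    rw [mpLHS]
    simp only [LinearMap.coe_comp, Function.comp_apply]
    rw [LinearMap.mulRight_one, LinearMap.comp_id]
    rw [← LinearMap.comp_apply (cPhi k H L), cPhi_psi, LinearMap.comp_apply]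
    rw [← LinearMap.comp_apply (TensorProduct.map _ _), ← TensorProduct.map_comp]
    rw [hcR2ρ]
    have hc : cPL k L ∘ₗ (Coalgebra.comul (R := k) ∘ₗ act.flip 1) = act.flip 1 := by
      rw [← LinearMap.comp_assoc, cPL_comul, LinearMap.id_comp]
    rw [hc]
    rw [← LinearMap.rTensor_comp_lTensor, LinearMap.comp_apply]
    rw [Coalgebra.lTensor_counit_comul]
    simp
  have e2 : cPhi k H L (mpRHS k act ρ 1 1 h)
      = (TensorProduct.rid k L)
          ((TensorProduct.map (act.flip 1) ((Coalgebra.counit (R := k)) ∘ₗ act.flip 1))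
            (Coalgebra.comul (R := k) h)) := by
    rw [mpRHS]
    simp only [LinearMap.coe_comp, Function.comp_apply]
    rw [← LinearMap.comp_apply (cPhi k H L), cPhi_psi, LinearMap.comp_apply]
    rw [← LinearMap.comp_apply (TensorProduct.map _ _), ← TensorProduct.map_comp]
    rw [cPL_beta act ρ htc, cR2_gamma act ρ htc hcoone hcact]
    simp only [LinearMap.coe_comp, Function.comp_apply, LinearEquiv.coe_coe]
    exact conv_collapse (act.flip 1) ((Coalgebra.counit (R := k)) ∘ₗ act.flip 1)
      (counit_conv_sq act hAct) h
  have goal1 : act h 1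
      = (TensorProduct.rid k L)
          ((TensorProduct.map (act.flip 1) ((Coalgebra.counit (R := k)) ∘ₗ act.flip 1))
            (Coalgebra.comul (R := k) h)) := by
    rw [← e1, hcompat h 1 1, e2]
  refine ⟨goal1, ?_⟩
  -- Goal 2 via quasi-abelianity
  have hqaE := congrArg (cW k H L) (hqa h 1)
  simp only [LinearMap.coe_comp, Function.comp_apply, LinearEquiv.coe_coe] at hqaE
  -- left side
  have l1 := LinearMap.congr_fun (cW_qa_left (k := k) (H := H) (L := L))
    ((TensorProduct.assoc k L H L).symm
      ((TensorProduct.map (act.flip 1) ρ) (Coalgebra.comul (R := k) h)))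
  simp only [LinearMap.coe_comp, Function.comp_apply, LinearEquiv.coe_coe,
    LinearEquiv.apply_symm_apply] at l1
  -- right side
  have r1 := LinearMap.congr_fun (cW_qa_right (k := k) (H := H) (L := L))
    ((TensorProduct.map ρ (act.flip 1)) (Coalgebra.comul (R := k) h))
  simp only [LinearMap.coe_comp, Function.comp_apply, LinearEquiv.coe_coe] at r1
  have hL2 : (TensorProduct.lid k H)
        ((TensorProduct.map ((Coalgebra.counit (R := k)) ∘ₗ act.flip 1) LinearMap.id)
          (Coalgebra.comul (R := k) h))
      = (TensorProduct.rid k H)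
          ((TensorProduct.map LinearMap.id ((Coalgebra.counit (R := k)) ∘ₗ act.flip 1))
            (Coalgebra.comul (R := k) h)) := by
    have c1 : TensorProduct.map ((Coalgebra.counit (R := k)) ∘ₗ act.flip 1) LinearMap.id
        = TensorProduct.map (Coalgebra.counit (R := k)) (cW k H L)
            ∘ₗ TensorProduct.map (act.flip 1) ρ := by
      rw [← TensorProduct.map_comp, hcWρ]
    have c2 : TensorProduct.map LinearMap.id ((Coalgebra.counit (R := k)) ∘ₗ act.flip 1)
        = TensorProduct.map (cW k H L) (Coalgebra.counit (R := k))
            ∘ₗ TensorProduct.map ρ (act.flip 1) := by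
      rw [← TensorProduct.map_comp, hcWρ]
    rw [c1, c2]
    simp only [LinearMap.comp_apply]
    rw [← l1, ← r1]
    exact hqaE
  have happ := congrArg (act.flip 1) hL2
  have m1 := LinearMap.congr_fun
    (map_lid_comm ((Coalgebra.counit (R := k)) ∘ₗ act.flip 1) (act.flip 1))
    ((Coalgebra.comul (R := k)) h)
  have m2 := LinearMap.congr_fun
    (map_rid_comm ((Coalgebra.counit (R := k)) ∘ₗ act.flip 1) (act.flip 1))
    ((Coalgebra.comul (R := k)) h)
  simp only [LinearMap.coe_comp, Function.comp_apply, LinearEquiv.coe_coe] at m1 m2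
  rw [m1, m2] at happ
  rw [goal1]
  exact happ.symm
end PartialHopf
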